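/- Let n = 2N with N ≥ 2, h = 1/n, and let z₁, z₂ ∈ ℂ. Set Ã^h = L^h − z₁ I (size n−1) and Ã^{2h} = L^{2h} − z₂ I (size N−1), and assume Ã^{2h} is invertible. Define the two-grid correction operator TG = I − P (Ã^{2h})⁻¹ R Ã^h. Then for every l with 1 ≤ l ≤ N−1, writing λ_l^h = 4n² sin²(lπ/(2n)) − z₁ and λ_l^{2h} = n² sin²(lπ/n) − z₂, one has TG w_l^h = w_l^h − c_l (λ_l^h / λ_l^{2h}) (c_l w_l^h − s_l w_{n−l}^h), where c_l = cos²(lπ/(2n)) and s_l = sin²(lπ/(2n)). -/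

import Mathlib

open Real Matrix Complex

/-- The one-dimensional discrete Dirichlet Laplacian on `m` intervals with grid
spacing `δ`, as a complex `(m-1)×(m-1)` matrix: diagonal entries `2/δ²`,
first sub- and superdiagonal entries `-1/δ²`, all other entries zero. -/
noncomputable def dLapC (m : ℕ) (δ : ℝ) : Matrix (Fin (m - 1)) (Fin (m - 1)) ℂ :=
  Matrix.of fun i j =>
    if (i : ℕ) = (j : ℕ) then 2 / (δ : ℂ) ^ 2
    else if (i : ℕ) + 1 = (j : ℕ) ∨ (j : ℕ) + 1 = (i : ℕ) then -(1 / (δ : ℂ) ^ 2)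
    else 0

/-- Fine-grid Fourier mode `w_l^h ∈ ℂ^{n-1}`, `n = 2N`: components `sin (l j π / (2N))`. -/
noncomputable def fineModeC (N l : ℕ) : Fin (2 * N - 1) → ℂ :=
  fun j => (Real.sin (l * ((j : ℕ) + 1) * Real.pi / (2 * N)) : ℂ)

/-- Full-weighting restriction `R`, the `(N-1)×(2N-1)` matrix with
`R_{i,2i-1} = R_{i,2i+1} = 1/4`, `R_{i,2i} = 1/2`. -/
noncomputable def fullWeightingC (N : ℕ) : Matrix (Fin (N - 1)) (Fin (2 * N - 1)) ℂ :=
  Matrix.of fun i j =>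
    if (j : ℕ) + 1 = 2 * ((i : ℕ) + 1) then 1 / 2
    else if (j : ℕ) + 2 = 2 * ((i : ℕ) + 1) ∨ (j : ℕ) = 2 * ((i : ℕ) + 1) then 1 / 4
    else 0

/-- Linear interpolation `P`, the `(2N-1)×(N-1)` matrix with `P_{2i,i} = 1`,
`P_{2i-1,i} = P_{2i+1,i} = 1/2`. -/
noncomputable def linInterpC (N : ℕ) : Matrix (Fin (2 * N - 1)) (Fin (N - 1)) ℂ :=
  Matrix.of fun j i =>
    if (j : ℕ) + 1 = 2 * ((i : ℕ) + 1) then 1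
    else if (j : ℕ) + 2 = 2 * ((i : ℕ) + 1) ∨ (j : ℕ) = 2 * ((i : ℕ) + 1) then 1 / 2
    else 0


/-! The sine modes are eigenvectors of both shifted Laplacians (by the three-term recurrence
`sin((u-1)θ) + sin((u+1)θ) = 2 cos θ sin(uθ)`),
full weighting maps the fine mode `w_l` to `c_l` times the coarse mode of the same frequency, and
linear interpolation maps that coarse mode back to `c_l w_l - s_l w_{n-l}`: on even fine nodes it
reproduces the sine, on odd ones it averages two neighbours and picks up `cos(lπ/n) = c_l - s_l`,
while the alias `w_{n-l}` equals `±w_l` with the sign alternating with the node's parity. -/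

/-- The vector of interior values `W 1, …, W (m-1)` of a grid function on the nodes
`0, …, m`; the boundary values `W 0` and `W m` enter only as Dirichlet data. -/
def interiorVec (m : ℕ) (W : ℕ → ℂ) : Fin (m - 1) → ℂ := fun j => W ((j : ℕ) + 1)

noncomputable def sinMode (θ : ℝ) (u : ℕ) : ℂ := (Real.sin (u * θ) : ℂ)

lemma Fin.sum_ite_succ_eq_mul {R : Type*} [Semiring R] {M t : ℕ} (b : R) (W : ℕ → R)
    (hW : t = 0 ∨ M < t → W t = 0) :
    ∑ k : Fin M, (if (k : ℕ) + 1 = t then b else 0) * W ((k : ℕ) + 1) = b * W t := by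
  have hterm : ∀ k : Fin M, (if (k : ℕ) + 1 = t then b else 0) * W ((k : ℕ) + 1)
      = if (k : ℕ) + 1 = t then b * W t else 0 := by
    intro k
    split_ifs with hk
    · rw [hk]
    · rw [zero_mul]
  simp only [hterm]
  by_cases ht : t = 0 ∨ M < t
  · simp [hW ht]
  · rw [Finset.sum_eq_single_of_mem (⟨t - 1, by omega⟩ : Fin M) (Finset.mem_univ _)]
    · rw [if_pos (by simp only; omega)]
    · intro k _ hk
      exact if_neg fun h => hk (Fin.ext (by simp only; omega))

lemma dLapC_mulVec_interiorVec_apply (m : ℕ) (δ : ℝ) (W : ℕ → ℂ) (hW0 : W 0 = 0)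
    (hWm : W m = 0) (j : Fin (m - 1)) :
    (dLapC m δ *ᵥ interiorVec m W) j
      = (2 * W ((j : ℕ) + 1) - W j - W ((j : ℕ) + 2)) / (δ : ℂ) ^ 2 := by
  have hentry : ∀ k : Fin (m - 1), dLapC m δ j k
      = (if (k : ℕ) + 1 = (j : ℕ) + 1 then 2 / (δ : ℂ) ^ 2 else 0)
        + (if (k : ℕ) + 1 = j then -(1 / (δ : ℂ) ^ 2) else 0)
        + (if (k : ℕ) + 1 = (j : ℕ) + 2 then -(1 / (δ : ℂ) ^ 2) else 0) := by
    intro k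
    simp only [dLapC, Matrix.of_apply]
    split_ifs <;> first | omega | ring
  have hj := j.isLt
  simp only [mulVec, dotProduct, hentry, add_mul, Finset.sum_add_distrib, interiorVec]
  have hW_left : (j : ℕ) = 0 ∨ m - 1 < j → W j = 0 := by
    rintro (h | h)
    · rw [h, hW0]
    · omega
  have hW_right : (j : ℕ) + 2 = 0 ∨ m - 1 < (j : ℕ) + 2 → W ((j : ℕ) + 2) = 0 := by
    intro _
    rw [show (j : ℕ) + 2 = m by omega, hWm]
  rw [Fin.sum_ite_succ_eq_mul _ _ (by omega), Fin.sum_ite_succ_eq_mul _ _ hW_left,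
    Fin.sum_ite_succ_eq_mul _ _ hW_right]
  ring

lemma fullWeightingC_mulVec_interiorVec_apply (N : ℕ) (W : ℕ → ℂ) (i : Fin (N - 1)) :
    (fullWeightingC N *ᵥ interiorVec (2 * N) W) i
      = (W (2 * i + 1) + 2 * W (2 * i + 2) + W (2 * i + 3)) / 4 := by
  have hentry : ∀ k : Fin (2 * N - 1), fullWeightingC N i k
      = (if (k : ℕ) + 1 = 2 * i + 1 then 1 / 4 else 0)
        + (if (k : ℕ) + 1 = 2 * i + 2 then 1 / 2 else 0)
        + (if (k : ℕ) + 1 = 2 * i + 3 then 1 / 4 else 0) := by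
    intro k
    simp only [fullWeightingC, Matrix.of_apply]
    split_ifs <;> first | omega | ring
  have hi := i.isLt
  simp only [mulVec, dotProduct, hentry, add_mul, Finset.sum_add_distrib, interiorVec]
  rw [Fin.sum_ite_succ_eq_mul _ _ (by omega), Fin.sum_ite_succ_eq_mul _ _ (by omega),
    Fin.sum_ite_succ_eq_mul _ _ (by omega)]
  ring

lemma linInterpC_mulVec_interiorVec_apply_coarse_node (N : ℕ) (V : ℕ → ℂ)
    (j : Fin (2 * N - 1)) {r : ℕ} (hj : (j : ℕ) = 2 * r + 1) :
    (linInterpC N *ᵥ interiorVec N V) j = V (r + 1) := by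
  have hentry : ∀ k : Fin (N - 1), linInterpC N j k
      = if (k : ℕ) + 1 = r + 1 then 1 else 0 := by
    intro k
    simp only [linInterpC, Matrix.of_apply]
    split_ifs <;> first | omega | ring
  have hjN := j.isLt
  simp only [mulVec, dotProduct, hentry, interiorVec]
  rw [Fin.sum_ite_succ_eq_mul _ _ (by omega), one_mul]

lemma linInterpC_mulVec_interiorVec_apply_midpoint (N : ℕ) (V : ℕ → ℂ) (hV0 : V 0 = 0)
    (hVN : V N = 0) (j : Fin (2 * N - 1)) {r : ℕ} (hj : (j : ℕ) = 2 * r) :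
    (linInterpC N *ᵥ interiorVec N V) j = (V r + V (r + 1)) / 2 := by
  have hentry : ∀ k : Fin (N - 1), linInterpC N j k
      = (if (k : ℕ) + 1 = r then 1 / 2 else 0) + (if (k : ℕ) + 1 = r + 1 then 1 / 2 else 0) := by
    intro k
    simp only [linInterpC, Matrix.of_apply]
    split_ifs <;> first | omega | ring
  have hjN := j.isLt
  simp only [mulVec, dotProduct, hentry, add_mul, Finset.sum_add_distrib, interiorVec]
  have hV_left : r = 0 ∨ N - 1 < r → V r = 0 := by
    rintro (h | h)
    · rw [h, hV0]
    · omega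
  have hV_right : r + 1 = 0 ∨ N - 1 < r + 1 → V (r + 1) = 0 := by
    intro _
    rw [show r + 1 = N by omega, hVN]
  rw [Fin.sum_ite_succ_eq_mul _ _ hV_left, Fin.sum_ite_succ_eq_mul _ _ hV_right]
  ring

lemma sinMode_zero (θ : ℝ) : sinMode θ 0 = 0 := by simp [sinMode]

lemma sinMode_add_sinMode_add_two (θ : ℝ) (u : ℕ) :
    sinMode θ u + sinMode θ (u + 2) = 2 * (Real.cos θ : ℂ) * sinMode θ (u + 1) := by
  have key : Real.sin ((u + 1) * θ - θ) + Real.sin ((u + 1) * θ + θ)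
      = 2 * Real.cos θ * Real.sin ((u + 1) * θ) := by
    rw [Real.sin_sub, Real.sin_add]; ring
  rw [show ((u : ℝ) + 1) * θ - θ = u * θ by ring,
    show ((u : ℝ) + 1) * θ + θ = (u + 2) * θ by ring] at key
  simp only [sinMode]
  push_cast
  exact_mod_cast key

lemma sinMode_mul_two (θ : ℝ) (u : ℕ) : sinMode (2 * θ) u = sinMode θ (2 * u) := by
  simp only [sinMode]
  push_cast
  ring_nf

lemma sinMode_pi_sub (θ : ℝ) (u : ℕ) : sinMode (π - θ) u = (-1) ^ (u + 1) * sinMode θ u := by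
  simp only [sinMode]
  rw [mul_sub, Real.sin_nat_mul_pi_sub]
  push_cast
  ring

lemma ofReal_cos_eq_cos_half_sq_sub_sin_half_sq (θ : ℝ) :
    (Real.cos θ : ℂ) = (Real.cos (θ / 2) : ℂ) ^ 2 - (Real.sin (θ / 2) : ℂ) ^ 2 := by
  have h := Real.cos_two_mul' (θ / 2)
  rw [mul_div_cancel₀ θ two_ne_zero] at h
  exact_mod_cast h

lemma ofReal_cos_half_sq_add_sin_half_sq (θ : ℝ) :
    (Real.cos (θ / 2) : ℂ) ^ 2 + (Real.sin (θ / 2) : ℂ) ^ 2 = 1 := by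
  exact_mod_cast Real.cos_sq_add_sin_sq (θ / 2)

lemma dLapC_mulVec_sinMode (m : ℕ) (δ θ : ℝ) (hθ : sinMode θ m = 0) :
    dLapC m δ *ᵥ interiorVec m (sinMode θ)
      = (4 / (δ : ℂ) ^ 2 * (Real.sin (θ / 2) : ℂ) ^ 2) • interiorVec m (sinMode θ) := by
  ext j
  rw [dLapC_mulVec_interiorVec_apply m δ _ (sinMode_zero θ) hθ]
  simp only [Pi.smul_apply, smul_eq_mul, interiorVec]
  linear_combination (-1 / (δ : ℂ) ^ 2) * sinMode_add_sinMode_add_two θ j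
    - 2 / (δ : ℂ) ^ 2 * sinMode θ (j + 1) * ofReal_cos_eq_cos_half_sq_sub_sin_half_sq θ
    - 2 / (δ : ℂ) ^ 2 * sinMode θ (j + 1) * ofReal_cos_half_sq_add_sin_half_sq θ

lemma fullWeightingC_mulVec_sinMode (N : ℕ) (θ : ℝ) :
    fullWeightingC N *ᵥ interiorVec (2 * N) (sinMode θ)
      = (Real.cos (θ / 2) : ℂ) ^ 2 • interiorVec N (sinMode (2 * θ)) := by
  ext i
  rw [fullWeightingC_mulVec_interiorVec_apply]
  simp only [Pi.smul_apply, smul_eq_mul, interiorVec, sinMode_mul_two, mul_add, mul_one]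
  linear_combination (1 / 4 : ℂ) * sinMode_add_sinMode_add_two θ (2 * i + 1)
    + 1 / 2 * sinMode θ (2 * i + 2) * ofReal_cos_eq_cos_half_sq_sub_sin_half_sq θ
    - 1 / 2 * sinMode θ (2 * i + 2) * ofReal_cos_half_sq_add_sin_half_sq θ

lemma linInterpC_mulVec_sinMode (N : ℕ) (θ : ℝ) (hθ : sinMode θ (2 * N) = 0) :
    linInterpC N *ᵥ interiorVec N (sinMode (2 * θ))
      = (Real.cos (θ / 2) : ℂ) ^ 2 • interiorVec (2 * N) (sinMode θ)
        - (Real.sin (θ / 2) : ℂ) ^ 2 • interiorVec (2 * N) (sinMode (π - θ)) := by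
  ext j
  simp only [Pi.sub_apply, Pi.smul_apply, smul_eq_mul, interiorVec, sinMode_pi_sub]
  obtain ⟨r, hr | hr⟩ := Nat.even_or_odd' (j : ℕ)
  · rw [linInterpC_mulVec_interiorVec_apply_midpoint N _ (sinMode_zero _)
      (by rwa [sinMode_mul_two]) j hr, hr]
    simp only [sinMode_mul_two, mul_add, mul_one, pow_succ, pow_mul]
    linear_combination (1 / 2 : ℂ) * sinMode_add_sinMode_add_two θ (2 * r)
      + sinMode θ (2 * r + 1) * ofReal_cos_eq_cos_half_sq_sub_sin_half_sq θ
  · rw [linInterpC_mulVec_interiorVec_apply_coarse_node N _ j hr, hr]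
    simp only [sinMode_mul_two, mul_add, mul_one, pow_succ, pow_mul]
    linear_combination (-sinMode θ (2 * r + 2)) * ofReal_cos_half_sq_add_sin_half_sq θ

lemma dLapC_sub_smul_one_mulVec_sinMode (m : ℕ) (δ θ : ℝ) (hδ : δ = 1 / m) (z : ℂ)
    (hθ : sinMode θ m = 0) :
    (dLapC m δ - z • 1) *ᵥ interiorVec m (sinMode θ)
      = (4 * (m : ℂ) ^ 2 * (Real.sin (θ / 2) : ℂ) ^ 2 - z) • interiorVec m (sinMode θ) := by
  rw [sub_mulVec, dLapC_mulVec_sinMode m δ θ hθ, smul_mulVec, one_mulVec, sub_smul, hδ]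
  push_cast
  rw [one_div, inv_pow, div_inv_eq_mul]

lemma Matrix.inv_mulVec_eq_inv_smul {K n : Type*} [Field K] [Fintype n] [DecidableEq n]
    {A : Matrix n n K} (hA : IsUnit A.det) {v : n → K} (hv : v ≠ 0) {μ : K}
    (h : A *ᵥ v = μ • v) : A⁻¹ *ᵥ v = μ⁻¹ • v := by
  have hμ : μ ≠ 0 := by
    rintro rfl
    exact hv (eq_zero_of_mulVec_eq_zero hA.ne_zero (by rw [h, zero_smul]))
  calc A⁻¹ *ᵥ v = μ⁻¹ • A⁻¹ *ᵥ (μ • v) := by rw [mulVec_smul, inv_smul_smul₀ hμ]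
    _ = μ⁻¹ • v := by rw [← h, mulVec_mulVec, nonsing_inv_mul A hA, one_mulVec]

lemma interiorVec_sinMode_nat_mul_pi_div_ne_zero {N l : ℕ} (hl₁ : 1 ≤ l) (hl₂ : l < N) :
    interiorVec N (sinMode (l * π / N)) ≠ 0 := by
  have hl : (1 : ℝ) ≤ l := by exact_mod_cast hl₁
  have hlN : (l : ℝ) < N := by exact_mod_cast hl₂
  have hpos : 0 < Real.sin (l * π / N) := by
    apply Real.sin_pos_of_pos_of_lt_pi (div_pos (by positivity) (by linarith))
    rw [div_lt_iff₀ (by linarith)]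
    nlinarith [Real.pi_pos]
  intro h
  have h₀ := congrFun h ⟨0, by omega⟩
  simp only [interiorVec, sinMode, Pi.zero_apply, zero_add, Nat.cast_one, one_mul,
    Complex.ofReal_eq_zero] at h₀
  exact hpos.ne' h₀

lemma fineModeC_eq_interiorVec_sinMode (N l : ℕ) :
    fineModeC N l = interiorVec (2 * N) (sinMode (l * π / (2 * N))) := by
  ext j
  simp only [fineModeC, interiorVec, sinMode]
  push_cast
  ring_nf

lemma fineModeC_two_mul_sub_eq_interiorVec_sinMode {N l : ℕ} (hN : N ≠ 0) (hl : l ≤ 2 * N) :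
    fineModeC N (2 * N - l) = interiorVec (2 * N) (sinMode (π - l * π / (2 * N))) := by
  have hN' : (N : ℝ) ≠ 0 := by exact_mod_cast hN
  rw [fineModeC_eq_interiorVec_sinMode, Nat.cast_sub hl]
  push_cast
  congr 2
  field_simp

theorem twoGrid_smooth_mode_general (N : ℕ) (h : ℝ) (hh : h = 1 / (2 * N))
    (z₁ z₂ : ℂ)
    (hinv : IsUnit (dLapC N (2 * h) - z₂ • (1 : Matrix (Fin (N - 1)) (Fin (N - 1)) ℂ)).det) :
    ∀ l : ℕ, 1 ≤ l → l ≤ N - 1 →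
      (1 - linInterpC N * (dLapC N (2 * h) - z₂ • 1)⁻¹ * fullWeightingC N
            * (dLapC (2 * N) h - z₁ • 1)).mulVec (fineModeC N l)
        = fineModeC N l
          - ((Real.cos (l * Real.pi / (2 * (2 * N))) : ℂ) ^ 2
              * ((4 * ((2 * N : ℕ) : ℂ) ^ 2 * (Real.sin (l * Real.pi / (2 * (2 * N))) : ℂ) ^ 2 - z₁)
                / (((2 * N : ℕ) : ℂ) ^ 2 * (Real.sin (l * Real.pi / (2 * N)) : ℂ) ^ 2 - z₂)))
            • ((Real.cos (l * Real.pi / (2 * (2 * N))) : ℂ) ^ 2 • fineModeC N l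
                - (Real.sin (l * Real.pi / (2 * (2 * N))) : ℂ) ^ 2 • fineModeC N (2 * N - l)) := by
  intro l hl₁ hl₂
  have hN : (N : ℝ) ≠ 0 := by norm_cast; omega
  set θ : ℝ := l * π / (2 * N) with hθ
  have hhalf : (l : ℝ) * π / (2 * (2 * N)) = θ / 2 := by rw [hθ]; ring
  have hbdry : sinMode θ (2 * N) = 0 := by
    rw [sinMode, show ((2 * N : ℕ) : ℝ) * θ = l * π by rw [hθ]; push_cast; field_simp,
      Real.sin_nat_mul_pi, Complex.ofReal_zero]
  have hfine :=
    dLapC_sub_smul_one_mulVec_sinMode (2 * N) h θ (by rw [hh]; push_cast; ring) z₁ hbdry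
  have hcoarse : (dLapC N (2 * h) - z₂ • 1) *ᵥ interiorVec N (sinMode (2 * θ))
      = (((2 * N : ℕ) : ℂ) ^ 2 * (Real.sin θ : ℂ) ^ 2 - z₂) • interiorVec N (sinMode (2 * θ)) := by
    rw [dLapC_sub_smul_one_mulVec_sinMode N (2 * h) (2 * θ) (by rw [hh]; ring) z₂
      (by rwa [sinMode_mul_two]), mul_div_cancel_left₀ θ two_ne_zero]
    push_cast
    ring_nf
  have hu : interiorVec N (sinMode (2 * θ)) ≠ 0 := by
    rw [show 2 * θ = l * π / N by rw [hθ]; field_simp]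
    exact interiorVec_sinMode_nat_mul_pi_div_ne_zero hl₁ (by omega)
  rw [hhalf, fineModeC_two_mul_sub_eq_interiorVec_sinMode (by omega) (by omega),
    fineModeC_eq_interiorVec_sinMode, ← hθ, sub_mulVec, one_mulVec, ← mulVec_mulVec,
    ← mulVec_mulVec, ← mulVec_mulVec, hfine]
  simp only [mulVec_smul, fullWeightingC_mulVec_sinMode, inv_mulVec_eq_inv_smul hinv hu hcoarse,
    linInterpC_mulVec_sinMode N θ hbdry]
  module

/-- action of the two-grid correction operator
`TG = I − P (Ã^{2h})⁻¹ R Ã^h` (with `Ã^h = L^h − z₁ I`, `Ã^{2h} = L^{2h} − z₂ I`,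
`Ã^{2h}` invertible) on a smooth fine-grid Fourier mode `w_l^h`, `1 ≤ l ≤ N−1`:
`TG w_l^h = w_l^h − c_l (λ_l^h / λ_l^{2h}) (c_l w_l^h − s_l w_{n−l}^h)`. -/
theorem twoGrid_smooth_mode (N : ℕ) (hN : 2 ≤ N) (h : ℝ) (hh : h = 1 / (2 * N))
    (z₁ z₂ : ℂ)
    (hinv : IsUnit (dLapC N (2 * h) - z₂ • (1 : Matrix (Fin (N - 1)) (Fin (N - 1)) ℂ)).det) :
    ∀ l : ℕ, 1 ≤ l → l ≤ N - 1 →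
      (1 - linInterpC N * (dLapC N (2 * h) - z₂ • 1)⁻¹ * fullWeightingC N
            * (dLapC (2 * N) h - z₁ • 1)).mulVec (fineModeC N l)
        = fineModeC N l
          - ((Real.cos (l * Real.pi / (2 * (2 * N))) : ℂ) ^ 2
              * ((4 * ((2 * N : ℕ) : ℂ) ^ 2 * (Real.sin (l * Real.pi / (2 * (2 * N))) : ℂ) ^ 2 - z₁)
                / (((2 * N : ℕ) : ℂ) ^ 2 * (Real.sin (l * Real.pi / (2 * N)) : ℂ) ^ 2 - z₂)))
            • ((Real.cos (l * Real.pi / (2 * (2 * N))) : ℂ) ^ 2 • fineModeC N l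
                - (Real.sin (l * Real.pi / (2 * (2 * N))) : ℂ) ^ 2 • fineModeC N (2 * N - l)) :=
  twoGrid_smooth_mode_general N h hh z₁ z₂ hinv
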